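/- Let p be a prime, N ≥ 1, ξ = exp(2πi/p), and let ψ be a ℤ/pℤ-linear automorphism of (ℤ/pℤ)^N. Let C ⊆ (ℤ/pℤ)^{2N} be a ℤ/pℤ-linear subspace with #C = p^r that is self-orthogonal with respect to the bilinear form ((v,w),(v',w')) ↦ ⟨v, ψ(w')⟩ − ⟨v', ψ(w)⟩. Then the matrices E_{v,ψ(w)} for (v,w) ∈ C pairwise commute, and the set S = { ξ^k E_{v,ψ(w)} : k ∈ ℤ/pℤ, (v,w) ∈ C } is an abelian subgroup of GL_{p^N}(ℂ) of order p^{r+1}, equal to the subgroup generated by { E_{v,ψ(w)} : (v,w) ∈ C } together with ξ·I. -/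
import Mathlib


open Matrix Complex

/-- `ξ = exp(2πi/p)`. -/
noncomputable def xi (p : ℕ) : ℂ := Complex.exp (2 * Real.pi * Complex.I / p)

/-- The cyclic shift matrix `T`, with `T_{i,j} = 1` iff `j = i + 1` in `ℤ/pℤ`. -/
def Tmat (p : ℕ) : Matrix (ZMod p) (ZMod p) ℂ :=
  Matrix.of fun i j => if j = i + 1 then 1 else 0

/-- The diagonal matrix `R = diag(1, ξ, ξ², …, ξ^{p-1})`. -/
noncomputable def Rmat (p : ℕ) : Matrix (ZMod p) (ZMod p) ℂ :=
  Matrix.diagonal fun i => xi p ^ i.val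

/-- `E_{v,w} = (T^{v_1} R^{w_1}) ⊗ ⋯ ⊗ (T^{v_N} R^{w_N})`, the iterated Kronecker product,
realized as a matrix indexed by `(ℤ/pℤ)^N`. -/
noncomputable def Emat (p N : ℕ) [NeZero p] (v w : Fin N → ZMod p) :
    Matrix (Fin N → ZMod p) (Fin N → ZMod p) ℂ :=
  Matrix.of fun x y => ∏ i, (Tmat p ^ (v i).val * Rmat p ^ (w i).val) (x i) (y i)

/-- The pairing `⟨v,w⟩ = Σ_i v_i w_i ∈ ℤ/pℤ`. -/
def inn (p N : ℕ) (v w : Fin N → ZMod p) : ZMod p := ∑ i, v i * w i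



section aux
variable (p : ℕ) [NeZero p]

noncomputable def om (k : ZMod p) : ℂ := xi p ^ k.val

lemma xi_prim : IsPrimitiveRoot (xi p) p := Complex.isPrimitiveRoot_exp p (NeZero.ne p)

lemma xi_pow_p : xi p ^ p = 1 := (xi_prim p).pow_eq_one

lemma xi_ne_zero : xi p ≠ 0 := Complex.exp_ne_zero _

lemma om_ne_zero (k : ZMod p) : om p k ≠ 0 := pow_ne_zero _ (xi_ne_zero p)

lemma om_natCast (n : ℕ) : xi p ^ n = om p (n : ZMod p) := by
  conv_lhs => rw [← Nat.mod_add_div n p]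
  rw [pow_add, pow_mul, xi_pow_p, one_pow, mul_one, om, ZMod.val_natCast]

lemma om_add (a b : ZMod p) : om p (a + b) = om p a * om p b := by
  simp only [om]
  rw [← pow_add, om_natCast, om_natCast]
  congr 1
  push_cast
  simp [ZMod.natCast_val, ZMod.cast_id]

lemma om_inj {a b : ZMod p} (h : om p a = om p b) : a = b := by
  have := (xi_prim p).pow_inj (ZMod.val_lt a) (ZMod.val_lt b) h
  have h2 := congrArg (Nat.cast : ℕ → ZMod p) this
  simpa [ZMod.natCast_val, ZMod.cast_id] using h2

lemma om_zero : om p 0 = 1 := by simp [om]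

lemma Tpow (a : ℕ) : (Tmat p ^ a) =
    Matrix.of fun x y => if y = x + (a : ZMod p) then 1 else 0 := by
  induction a with
  | zero => ext x y; simp [Matrix.one_apply, eq_comm]
  | succ a ih =>
    ext x y
    rw [pow_succ, ih, Matrix.mul_apply]
    simp only [Tmat, Matrix.of_apply]
    rw [Finset.sum_eq_single (x + (a : ZMod p))]
    · push_cast
      simp [add_assoc]
    · intro b _ hb
      rw [if_neg hb, zero_mul]
    · simp

lemma Rpow (a : ℕ) : (Rmat p ^ a) = Matrix.diagonal fun i => xi p ^ (a * i.val) := by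
  rw [Rmat, Matrix.diagonal_pow]
  have : ((fun i : ZMod p => xi p ^ i.val) ^ a) = fun i => xi p ^ (a * i.val) := by
    funext i
    rw [Pi.pow_apply, ← pow_mul, mul_comm]
  rw [this]

lemma TR_apply (a b : ℕ) (x y : ZMod p) :
    (Tmat p ^ a * Rmat p ^ b) x y =
      if y = x + (a : ZMod p) then xi p ^ (b * y.val) else 0 := by
  rw [Rpow, Matrix.mul_diagonal, Tpow, Matrix.of_apply]
  split <;> simp

variable (N : ℕ)

lemma inn_add_right (w a b : Fin N → ZMod p) :
    inn p N w (a + b) = inn p N w a + inn p N w b := by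
  simp [inn, mul_add, Finset.sum_add_distrib]

lemma inn_add_left (a b w : Fin N → ZMod p) :
    inn p N (a + b) w = inn p N a w + inn p N b w := by
  simp [inn, add_mul, Finset.sum_add_distrib]

lemma inn_neg_left (a w : Fin N → ZMod p) : inn p N (-a) w = - inn p N a w := by
  simp [inn]

lemma inn_neg_right (p N : ℕ) (w a : Fin N → ZMod p) : inn p N w (-a) = - inn p N w a := by
  simp [inn]

lemma inn_comm (a b : Fin N → ZMod p) : inn p N a b = inn p N b a := by
  simp [inn, mul_comm]

lemma inn_single (w : Fin N → ZMod p) (j : Fin N) :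
    inn p N w (Pi.single j 1) = w j := by
  simp [inn, Pi.single_apply]

lemma Emat_apply (v w x y : Fin N → ZMod p) :
    Emat p N v w x y = if y = x + v then om p (inn p N w y) else 0 := by
  rw [Emat, Matrix.of_apply]
  have key : ∀ i, (Tmat p ^ (v i).val * Rmat p ^ (w i).val) (x i) (y i) =
      if y i = x i + v i then xi p ^ ((w i).val * (y i).val) else 0 := by
    intro i
    rw [TR_apply]
    simp [ZMod.natCast_val, ZMod.cast_id]
  simp only [key]
  by_cases h : y = x + v
  · rw [if_pos h]
    have h' : ∀ i, y i = x i + v i := fun i => congrFun h i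
    rw [Finset.prod_congr rfl (fun i _ => if_pos (h' i))]
    rw [Finset.prod_pow_eq_pow_sum, om_natCast]
    congr 1
    push_cast
    simp [inn, ZMod.natCast_val, ZMod.cast_id]
  · rw [if_neg h]
    have : ∃ i, y i ≠ x i + v i := by
      by_contra hc
      push_neg at hc
      exact h (funext hc)
    obtain ⟨i, hi⟩ := this
    exact Finset.prod_eq_zero (Finset.mem_univ i) (if_neg hi)

lemma Emat_mul (v w v' w' : Fin N → ZMod p) :
    Emat p N v w * Emat p N v' w' =
      om p (- inn p N w v') • Emat p N (v + v') (w + w') := by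
  ext x y
  rw [Matrix.mul_apply]
  simp only [Emat_apply, Matrix.smul_apply, smul_eq_mul]
  rw [Finset.sum_eq_single (x + v)]
  · rw [if_pos rfl]
    by_cases hy : y = x + v + v'
    · rw [if_pos hy, if_pos (show y = x + (v + v') by rw [hy, add_assoc])]
      rw [← om_add, ← om_add]
      congr 1
      rw [inn_add_left p N w w' y]
      have h2 : inn p N w y = inn p N w (x + v) + inn p N w v' := by
        rw [← inn_add_right, ← hy]
      rw [h2]; ring
    · rw [if_neg hy, if_neg (fun h => hy (h.trans (add_assoc x v v').symm)), mul_zero, mul_zero]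
  · intro b _ hb
    rw [if_neg hb, zero_mul]
  · simp

lemma Emat_zero : Emat p N 0 0 = 1 := by
  ext x y
  rw [Emat_apply, Matrix.one_apply]
  simp [eq_comm, inn, om_zero]

end aux

lemma inn_zero_right (p N : ℕ) (w : Fin N → ZMod p) : inn p N w 0 = 0 := by
  simp [inn]

lemma om_def (p : ℕ) [NeZero p] (k : ZMod p) : om p k = xi p ^ k.val := rfl

theorem stmt12 (p N r : ℕ) (hp : p.Prime) [NeZero p] (hN : 1 ≤ N)
    (ψ : (Fin N → ZMod p) ≃ₗ[ZMod p] (Fin N → ZMod p))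
    (C : Submodule (ZMod p) ((Fin N → ZMod p) × (Fin N → ZMod p)))
    (hcard : Nat.card C = p ^ r)
    (horth : ∀ x ∈ C, ∀ y ∈ C, inn p N x.1 (ψ y.2) - inn p N y.1 (ψ x.2) = 0) :
    (∀ x ∈ C, ∀ y ∈ C,
      Commute (Emat p N x.1 (ψ x.2)) (Emat p N y.1 (ψ y.2))) ∧
    (let S : Set (Matrix (Fin N → ZMod p) (Fin N → ZMod p) ℂ) :=
        {A | ∃ k : ZMod p, ∃ x ∈ C, A = xi p ^ k.val • Emat p N x.1 (ψ x.2)}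
     (1 : Matrix (Fin N → ZMod p) (Fin N → ZMod p) ℂ) ∈ S ∧
     (∀ A ∈ S, ∀ B ∈ S, A * B ∈ S) ∧
     (∀ A ∈ S, ∃ B ∈ S, A * B = 1 ∧ B * A = 1) ∧
     (∀ A ∈ S, ∀ B ∈ S, A * B = B * A) ∧
     S.ncard = p ^ (r + 1) ∧
     S = (Submonoid.closure
        ({xi p • (1 : Matrix (Fin N → ZMod p) (Fin N → ZMod p) ℂ)} ∪
          (fun x : (Fin N → ZMod p) × (Fin N → ZMod p) =>
            Emat p N x.1 (ψ x.2)) '' (C : Set _)) :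
        Set (Matrix (Fin N → ZMod p) (Fin N → ZMod p) ℂ))) := by
  haveI : Fact (1 < p) := ⟨hp.one_lt⟩
  set F : (Fin N → ZMod p) × (Fin N → ZMod p) →
      Matrix (Fin N → ZMod p) (Fin N → ZMod p) ℂ :=
    fun x => Emat p N x.1 (ψ x.2) with hF
  have hmulF : ∀ x y, F x * F y = om p (- inn p N (ψ x.2) y.1) • F (x + y) := by
    intro x y
    simp only [hF]
    rw [Emat_mul]
    congr 1
    simp [map_add]
  have hFzero : F 0 = 1 := by
    simp only [hF]
    rw [show ((0 : (Fin N → ZMod p) × (Fin N → ZMod p)).2) = 0 from rfl, map_zero]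
    exact Emat_zero p N
  have hcomm : ∀ x ∈ C, ∀ y ∈ C, F x * F y = F y * F x := by
    intro x hx y hy
    rw [hmulF, hmulF, add_comm]
    congr 2
    have h1 := horth x hx y hy
    have h2 : inn p N x.1 (ψ y.2) = inn p N y.1 (ψ x.2) := by
      linear_combination h1
    rw [inn_comm p N (ψ x.2) y.1, inn_comm p N (ψ y.2) x.1, h2]
  refine ⟨fun x hx y hy => hcomm x hx y hy, ?_⟩
  intro S
  have hSmem : ∀ A, A ∈ S ↔ ∃ k : ZMod p, ∃ x ∈ C, A = om p k • F x := by
    intro A; rfl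
  have hone : (1 : Matrix (Fin N → ZMod p) (Fin N → ZMod p) ℂ) ∈ S := by
    rw [hSmem]
    exact ⟨0, 0, C.zero_mem, by rw [om_zero, one_smul, hFzero]⟩
  have hmulmem : ∀ A ∈ S, ∀ B ∈ S, A * B ∈ S := by
    intro A hA B hB
    rw [hSmem] at hA hB ⊢
    obtain ⟨k, x, hx, rfl⟩ := hA
    obtain ⟨l, y, hy, rfl⟩ := hB
    refine ⟨k + l + (- inn p N (ψ x.2) y.1), x + y, C.add_mem hx hy, ?_⟩
    rw [smul_mul_assoc, Matrix.mul_smul, hmulF, smul_smul, smul_smul,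
      om_add, om_add]
  have hSmul : ∀ (k : ZMod p) (x : _), x ∈ C → om p k • F x ∈ S := by
    intro k x hx
    rw [hSmem]; exact ⟨k, x, hx, rfl⟩
  have hinv : ∀ A ∈ S, ∃ B ∈ S, A * B = 1 ∧ B * A = 1 := by
    intro A hA
    rw [hSmem] at hA
    obtain ⟨k, x, hx, rfl⟩ := hA
    set m : ZMod p := inn p N (ψ x.2) x.1 with hm
    have he1 : -inn p N (ψ x.2) (-x).1 = m := by
      show -inn p N (ψ x.2) (-x.1) = m
      rw [inn_neg_right, neg_neg]
    have he2 : -inn p N (ψ (-x).2) x.1 = m := by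
      show -inn p N (ψ (-x.2)) x.1 = m
      rw [map_neg, inn_neg_left, neg_neg]
    refine ⟨om p (-(k + m)) • F (-x), hSmul _ _ (C.neg_mem hx), ?_, ?_⟩
    · rw [smul_mul_assoc, Matrix.mul_smul, hmulF, add_neg_cancel, hFzero,
        smul_smul, smul_smul, he1, ← om_add, ← om_add,
        show k + -(k + m) + m = 0 by ring, om_zero, one_smul]
    · rw [smul_mul_assoc, Matrix.mul_smul, hmulF, neg_add_cancel, hFzero,
        smul_smul, smul_smul, he2, ← om_add, ← om_add,
        show -(k + m) + k + m = 0 by ring, om_zero, one_smul]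
  have habel : ∀ A ∈ S, ∀ B ∈ S, A * B = B * A := by
    intro A hA B hB
    rw [hSmem] at hA hB
    obtain ⟨k, x, hx, rfl⟩ := hA
    obtain ⟨l, y, hy, rfl⟩ := hB
    rw [smul_mul_assoc, Matrix.mul_smul, smul_mul_assoc, Matrix.mul_smul,
      hcomm x hx y hy, smul_comm]
  -- injectivity and cardinality
  set f : ZMod p × C → Matrix (Fin N → ZMod p) (Fin N → ZMod p) ℂ :=
    fun kx => om p kx.1 • F kx.2.1 with hf
  have hEntry : ∀ (k : ZMod p) (x : (Fin N → ZMod p) × (Fin N → ZMod p)) a b,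
      (om p k • F x) a b = om p k * (if b = a + x.1 then om p (inn p N (ψ x.2) b) else 0) := by
    intro k x a b
    rw [Matrix.smul_apply, smul_eq_mul, hF]
    simp only
    rw [Emat_apply]
  have hinj : Function.Injective f := by
    rintro ⟨k, x⟩ ⟨l, y⟩ h
    simp only [hf] at h
    have hab : ∀ a b, (om p k • F x.1) a b = (om p l • F y.1) a b := fun a b => by rw [h]
    have hv : x.1.1 = y.1.1 := by
      have := hab 0 x.1.1
      rw [hEntry, hEntry, if_pos (zero_add x.1.1).symm] at this
      by_contra hvne
      rw [if_neg (fun hc => hvne (by rw [zero_add] at hc; exact hc)), mul_zero] at this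
      exact mul_ne_zero (om_ne_zero p k) (om_ne_zero p _) this
    have hz : ∀ z, om p (k + inn p N (ψ x.1.2) z) = om p (l + inn p N (ψ y.1.2) z) := by
      intro z
      have := hab (z - x.1.1) z
      rw [hEntry, hEntry, if_pos (by rw [sub_add_cancel]),
        if_pos (by rw [← hv, sub_add_cancel])] at this
      rw [om_add, om_add]
      exact this
    have hkl : k = l := by
      have := hz 0
      rw [inn_zero_right, inn_zero_right, add_zero, add_zero] at this
      exact om_inj p this
    have hw : ψ x.1.2 = ψ y.1.2 := by
      funext j
      have := hz (Pi.single j 1)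
      rw [inn_single, inn_single, hkl] at this
      have := om_inj p this
      exact add_left_cancel this
    have hw2 : x.1.2 = y.1.2 := ψ.injective hw
    have : x = y := Subtype.ext (Prod.ext hv hw2)
    rw [hkl, this]
  have hrange : S = Set.range f := by
    ext A
    rw [hSmem]
    constructor
    · rintro ⟨k, x, hx, rfl⟩
      exact ⟨⟨k, ⟨x, hx⟩⟩, rfl⟩
    · rintro ⟨⟨k, x⟩, rfl⟩
      exact ⟨k, x.1, x.2, rfl⟩
  have hncard : S.ncard = p ^ (r + 1) := by
    rw [← Nat.card_coe_set_eq, hrange, Nat.card_range_of_injective hinj,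
      Nat.card_prod, Nat.card_zmod, hcard, pow_succ']
  -- closure identity
  have hclosure : S = (Submonoid.closure
        ({xi p • (1 : Matrix (Fin N → ZMod p) (Fin N → ZMod p) ℂ)} ∪
          (fun x : (Fin N → ZMod p) × (Fin N → ZMod p) =>
            Emat p N x.1 (ψ x.2)) '' (C : Set _)) :
        Set (Matrix (Fin N → ZMod p) (Fin N → ZMod p) ℂ)) := by
    apply Set.Subset.antisymm
    · intro A hA
      rw [hSmem] at hA
      obtain ⟨k, x, hx, rfl⟩ := hA
      have h1 : (xi p • (1 : Matrix (Fin N → ZMod p) (Fin N → ZMod p) ℂ)) ∈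
          Submonoid.closure ({xi p • (1 : Matrix (Fin N → ZMod p) (Fin N → ZMod p) ℂ)} ∪
            (fun x : (Fin N → ZMod p) × (Fin N → ZMod p) =>
              Emat p N x.1 (ψ x.2)) '' (C : Set _)) :=
        Submonoid.subset_closure (Or.inl rfl)
      have h2 : F x ∈ Submonoid.closure ({xi p • (1 : Matrix (Fin N → ZMod p) (Fin N → ZMod p) ℂ)} ∪
            (fun x : (Fin N → ZMod p) × (Fin N → ZMod p) =>
              Emat p N x.1 (ψ x.2)) '' (C : Set _)) :=
        Submonoid.subset_closure (Or.inr ⟨x, hx, rfl⟩)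
      have heq : om p k • F x = (xi p • (1 : Matrix (Fin N → ZMod p) (Fin N → ZMod p) ℂ)) ^ k.val * F x := by
        rw [smul_pow, one_pow, smul_mul_assoc, one_mul, om_def]
      rw [heq]
      exact mul_mem (pow_mem h1 _) h2
    · have hle : Submonoid.closure ({xi p • (1 : Matrix (Fin N → ZMod p) (Fin N → ZMod p) ℂ)} ∪
            (fun x : (Fin N → ZMod p) × (Fin N → ZMod p) =>
              Emat p N x.1 (ψ x.2)) '' (C : Set _)) ≤
          { carrier := S, one_mem' := hone, mul_mem' := fun {a b} ha hb => hmulmem a ha b hb } := by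
        rw [Submonoid.closure_le]
        rintro A (rfl | ⟨x, hx, rfl⟩)
        · show (xi p • (1 : Matrix (Fin N → ZMod p) (Fin N → ZMod p) ℂ)) ∈ S
          have : xi p • (1 : Matrix (Fin N → ZMod p) (Fin N → ZMod p) ℂ) = om p 1 • F 0 := by
            rw [hFzero, om_def, ZMod.val_one, pow_one]
          rw [this]
          exact hSmul 1 0 C.zero_mem
        · show F x ∈ S
          have : F x = om p 0 • F x := by rw [om_zero, one_smul]
          rw [this]
          exact hSmul 0 x hx
      exact hle
  exact ⟨hone, hmulmem, hinv, habel, hncard, hclosure⟩
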